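/- There exist a ℚ-vector space V and a submonoid M of V contained in a positive cone, such that M satisfies the ACCP and for every nonempty subset L ⊆ ℕ_{≥2} there is an element b_L ∈ M with L_M(b_L) = L. Moreover, if min L > 2, then there are uncountably many elements b ∈ M with L_M(b) = L. -/

import Mathlib

/-- An atom of the additive submonoid `M`: a nonzero element of `M` that is not the
sum of two nonzero elements of `M`. -/
def IsAtomOf {α : Type*} [AddCommMonoid α] (M : AddSubmonoid α) (a : α) : Prop :=
  a ∈ M ∧ a ≠ 0 ∧ ∀ b ∈ M, ∀ c ∈ M, b + c = a → b = 0 ∨ c = 0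

/-- The length set of `q` in `M`: the set of all `ℓ` such that `q` is a sum of `ℓ`
atoms of `M` (counted with multiplicity). -/
def LengthSet {α : Type*} [AddCommMonoid α] (M : AddSubmonoid α) (q : α) : Set ℕ :=
  {ℓ | ∃ s : Multiset α, Multiset.card s = ℓ ∧ (∀ a ∈ s, IsAtomOf M a) ∧ s.sum = q}

/-- The additive submonoid `M` satisfies the ACCP: every ascending chain of principal
ideals `f n + M ⊆ f (n+1) + M` stabilizes. -/
def AddACCP {α : Type*} [AddCommMonoid α] (M : AddSubmonoid α) : Prop :=
  ∀ f : ℕ → α, (∀ n, f n ∈ M) → (∀ n, ∃ c ∈ M, f n = f (n + 1) + c) →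
    ∃ N, ∀ n ≥ N, ∃ c ∈ M, f n = f N + c

/-- The Puiseux monoid generated by the reciprocals of the elements of `P`. -/
def MP (P : Set ℕ) : AddSubmonoid ℚ :=
  AddSubmonoid.closure {q : ℚ | ∃ p ∈ P, q = 1 / (p : ℚ)}

/-!
Block `L` lives in `ℚ × ℚ` and is generated by `u ℓ = (1, 1 - (ℓ - 1) / 𝔭 ℓ)` and
`v ℓ = (0, 1 / 𝔭 ℓ)` for `ℓ ∈ L`, where `𝔭 ℓ` is the `ℓ`-th prime, so that
`(1, 1) = u ℓ + (ℓ - 1) • v ℓ` for every `ℓ ∈ L`. If a sum `∑ g q / q` over distinct primes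
is an integer, then every `q` divides `g q` (look at the `q`-adic norm). Hence a sum of
prime reciprocals equal to `r / q` with `r < q` consists of `r` copies of `1 / q`, and one
equal to `1` consists of `q` copies of `1 / q` for a single prime `q`. So the `u ℓ` and
`v ℓ` are atoms, and the factorizations of `(1, 1)` are exactly the sums
`u ℓ + (ℓ - 1) • v ℓ`; its length set is `L`.

`M` is the direct sum of these blocks over all pairs `(L, r)` with `r : ℝ`, which gives
uncountably many copies of each `(1, 1)`. All coordinates are nonnegative, so a
factorization of an element of one block uses only atoms of that block. Every coordinate
of an element of `M` lies in the Puiseux monoid generated by the reciprocals of the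
primes. That monoid has the ACCP because `x = N + ∑ r_q / q` with digits `0 ≤ r_q < q`
determines the pair `(N, ∑ r_q)`, and this pair strictly decreases lexicographically
when we pass to a proper divisor.
-/

theorem Multiset.exists_map_eq_of_forall_mem_image {α β : Type*} {f : β → α} {A : Set β}
    {s : Multiset α} (hs : ∀ x ∈ s, x ∈ f '' A) :
    ∃ t : Multiset β, (∀ y ∈ t, y ∈ A) ∧ t.map f = s := by
  induction s using Multiset.induction_on with
  | empty => exact ⟨0, by simp, rfl⟩
  | cons x s ih =>
    obtain ⟨t, htA, rfl⟩ := ih fun y hy => hs y (Multiset.mem_cons_of_mem hy)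
    obtain ⟨y, hyA, rfl⟩ := hs x (Multiset.mem_cons_self _ _)
    exact ⟨y ::ₘ t, by simpa using ⟨hyA, htA⟩, by simp⟩

theorem Multiset.exists_map_add_map_eq_of_forall_mem_union {α β γ : Type*} {f : β → α}
    {g : γ → α} {A : Set β} {B : Set γ} {s : Multiset α} (hs : ∀ x ∈ s, x ∈ f '' A ∪ g '' B) :
    ∃ (t₁ : Multiset β) (t₂ : Multiset γ), (∀ y ∈ t₁, y ∈ A) ∧ (∀ y ∈ t₂, y ∈ B) ∧
      t₁.map f + t₂.map g = s := by
  classical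
  obtain ⟨t₁, ht₁, h₁⟩ := Multiset.exists_map_eq_of_forall_mem_image (f := f) (A := A)
    (s := s.filter (· ∈ f '' A)) fun x hx => (Multiset.mem_filter.mp hx).2
  obtain ⟨t₂, ht₂, h₂⟩ := Multiset.exists_map_eq_of_forall_mem_image (f := g) (A := B)
    (s := s.filter (· ∉ f '' A)) fun x hx => by
      obtain ⟨hxs, hxA⟩ := Multiset.mem_filter.mp hx
      exact (hs x hxs).resolve_left hxA
  exact ⟨t₁, t₂, ht₁, ht₂, by rw [h₁, h₂, Multiset.filter_add_not]⟩

theorem Multiset.sum_toFinset_count_eq_of_subset {β M : Type*} [DecidableEq β]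
    [AddCommMonoid M] (T : Multiset β) {s : Finset β} (hs : T.toFinset ⊆ s)
    (f : β → ℕ → M) (hf : ∀ p, f p 0 = 0) :
    ∑ p ∈ T.toFinset, f p (T.count p) = ∑ p ∈ s, f p (T.count p) :=
  Finset.sum_subset hs fun p _ hp => by rw [Multiset.count_eq_zero.mpr (by simpa using hp), hf]

section Factorizations

variable {α : Type*} [AddCommMonoid α]

def factorizations (S : Set α) (b : α) : Set (Multiset α) :=
  {s | (∀ a ∈ s, a ∈ S) ∧ s.sum = b}

theorem mem_of_isAtomOf_closure {S : Set α} {a : α}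
    (ha : IsAtomOf (AddSubmonoid.closure S) a) : a ∈ S := by
  obtain ⟨hmem, hne, hirr⟩ := ha
  suffices ∀ x (hx : x ∈ AddSubmonoid.closure S), x = 0 ∨ x ∈ S ∨
      ∃ y ∈ AddSubmonoid.closure S, ∃ z ∈ AddSubmonoid.closure S, y ≠ 0 ∧ z ≠ 0 ∧ y + z = x by
    obtain h | h | ⟨y, hy, z, hz, hy0, hz0, hyz⟩ := this a hmem
    · exact absurd h hne
    · exact h
    · exact ((hirr y hy z hz hyz).elim hy0 hz0).elim
  intro x hx
  induction hx using AddSubmonoid.closure_induction with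
  | mem x hx => exact Or.inr (Or.inl hx)
  | zero => exact Or.inl rfl
  | add x y hx hy ihx ihy =>
    by_cases hx0 : x = 0
    · simpa [hx0] using ihy
    by_cases hy0 : y = 0
    · simpa [hy0] using ihx
    exact Or.inr (Or.inr ⟨x, hx, y, hy, hx0, hy0, rfl⟩)

theorem isAtomOf_closure_of_factorizations_eq {S : Set α} {a : α}
    (ha : factorizations S a = {{a}}) : IsAtomOf (AddSubmonoid.closure S) a := by
  have haS : a ∈ S := (ha.symm ▸ rfl : ({a} : Multiset α) ∈ factorizations S a).1 a
    (Multiset.mem_singleton_self a)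
  refine ⟨AddSubmonoid.subset_closure haS, fun h0 => ?_, fun y hy z hz hyz => ?_⟩
  · have : (0 : Multiset α) ∈ factorizations S a := ⟨by simp, by simp [h0]⟩
    simp [ha] at this
  · obtain ⟨sy, hsyS, rfl⟩ := AddSubmonoid.exists_multiset_of_mem_closure hy
    obtain ⟨sz, hszS, rfl⟩ := AddSubmonoid.exists_multiset_of_mem_closure hz
    have : sy + sz ∈ factorizations S a :=
      ⟨fun x hx => (Multiset.mem_add.mp hx).elim (hsyS x) (hszS x), by rw [Multiset.sum_add, hyz]⟩
    rw [ha, Set.mem_singleton_iff] at this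
    have hcard := congrArg Multiset.card this
    rw [Multiset.card_add, Multiset.card_singleton] at hcard
    rcases Nat.eq_zero_or_pos (Multiset.card sy) with h | h
    · left; simp [Multiset.card_eq_zero.mp h]
    · right; simp [Multiset.card_eq_zero.mp (by omega : Multiset.card sz = 0)]

theorem lengthSet_closure {S : Set α} (hS : ∀ a ∈ S, IsAtomOf (AddSubmonoid.closure S) a)
    (b : α) : LengthSet (AddSubmonoid.closure S) b = Multiset.card '' factorizations S b := by
  ext ℓ
  constructor
  · rintro ⟨s, rfl, hatoms, hsum⟩
    exact ⟨s, ⟨fun a ha => mem_of_isAtomOf_closure (hatoms a ha), hsum⟩, rfl⟩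
  · rintro ⟨s, ⟨hsS, hsum⟩, rfl⟩
    exact ⟨s, rfl, fun a ha => hS a (hsS a ha), hsum⟩

theorem mem_of_mem_lengthSet {M : AddSubmonoid α} {b : α} {ℓ : ℕ} (h : ℓ ∈ LengthSet M b) :
    b ∈ M := by
  obtain ⟨s, -, hatoms, rfl⟩ := h
  exact M.multiset_sum_mem s fun a ha => (hatoms a ha).1

end Factorizations

section ACCP

variable {α : Type*} [AddCommMonoid α]

theorem AddACCP.of_lt_add {β : Type*} [Preorder β] [WellFoundedLT β] {M : AddSubmonoid α}
    (μ : α → β) (hμ : ∀ y ∈ M, ∀ z ∈ M, z ≠ 0 → μ y < μ (y + z)) : AddACCP M := by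
  intro f hf hstep
  choose c hc hfc using hstep
  have hlt : ∀ n, c n ≠ 0 → μ (f (n + 1)) < μ (f n) := fun n h0 => by
    rw [hfc n]; exact hμ _ (hf _) _ (hc n) h0
  have hle : Antitone (μ ∘ f) := antitone_nat_of_succ_le fun n => by
    by_cases h0 : c n = 0
    · simp [hfc n, h0]
    · exact (hlt n h0).le
  obtain ⟨_, ⟨N, rfl⟩, hmin⟩ := wellFounded_lt.has_min (Set.range (μ ∘ f)) ⟨_, 0, rfl⟩
  have hconst : ∀ n ≥ N, f n = f (n + 1) := fun n hn => by
    by_contra hne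
    have h0 : c n ≠ 0 := fun h0 => hne (by rw [hfc n, h0, add_zero])
    exact hmin _ ⟨n + 1, rfl⟩ ((hlt n h0).trans_le (hle hn))
  refine ⟨N, fun n hn => ⟨0, M.zero_mem, ?_⟩⟩
  induction n, hn using Nat.le_induction with
  | base => rw [add_zero]
  | succ n hn ih => rw [← hconst n hn, ih]

theorem AddACCP.eventually_eq [PartialOrder α] [IsOrderedAddMonoid α] {M : AddSubmonoid α}
    (hM : AddACCP M) (hnonneg : ∀ x ∈ M, 0 ≤ x) {f : ℕ → α} (hf : ∀ n, f n ∈ M)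
    (hstep : ∀ n, ∃ c ∈ M, f n = f (n + 1) + c) : ∃ N, ∀ n ≥ N, f n = f N := by
  have hanti : Antitone f := antitone_nat_of_succ_le fun n => by
    obtain ⟨c, hc, hfc⟩ := hstep n
    exact hfc ▸ le_add_of_nonneg_right (hnonneg c hc)
  obtain ⟨N, hN⟩ := hM f hf hstep
  refine ⟨N, fun n hn => le_antisymm (hanti hn) ?_⟩
  obtain ⟨c, hc, hfc⟩ := hN n hn
  exact hfc ▸ le_add_of_nonneg_right (hnonneg c hc)

end ACCP

theorem AddACCP.of_forall_apply_mem {ι : Type*} {M : AddSubmonoid (ι →₀ ℚ)}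
    {P : AddSubmonoid ℚ} (hP : AddACCP P) (hPnonneg : ∀ x ∈ P, 0 ≤ x)
    (hMP : ∀ x ∈ M, ∀ i, x i ∈ P) : AddACCP M := by
  classical
  intro f hf hstep
  choose c hc hfc using hstep
  have happly : ∀ i n, f n i = f (n + 1) i + c n i := fun i n => by
    rw [hfc n, Finsupp.add_apply]
  have hanti : ∀ i, Antitone (f · i) := fun i => antitone_nat_of_succ_le fun n =>
    (happly i n).symm ▸ le_add_of_nonneg_right (hPnonneg _ (hMP _ (hc n) i))
  choose N hN using fun i => hP.eventually_eq hPnonneg (fun n => hMP _ (hf n) i)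
    fun n => ⟨c n i, hMP _ (hc n) i, happly i n⟩
  refine ⟨(f 0).support.sup N, fun n hn => ⟨0, M.zero_mem, ?_⟩⟩
  ext i
  rw [add_zero]
  by_cases hi : i ∈ (f 0).support
  · have hNi := Finset.le_sup (f := N) hi
    rw [hN i n (by omega), hN i _ hNi]
  · have hzero : ∀ m, f m i = 0 := fun m => le_antisymm
      ((hanti i (Nat.zero_le m)).trans_eq (Finsupp.notMem_support_iff.mp hi))
      (hPnonneg _ (hMP _ (hf m) i))
    rw [hzero, hzero]

section Puiseux

theorem prime_dvd_of_sum_div_eq_intCast {s : Finset ℕ} (hs : ∀ p ∈ s, p.Prime) (g : ℕ → ℤ)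
    {z : ℤ} (h : ∑ p ∈ s, (g p : ℚ) / p = z) {p : ℕ} (hp : p ∈ s) : (p : ℤ) ∣ g p := by
  have := Fact.mk (hs p hp)
  have hrest : padicNorm p (∑ q ∈ s.erase p, (g q : ℚ) / q) ≤ 1 := by
    refine padicNorm.sum_le' (fun q hq => ?_) zero_le_one
    obtain ⟨hqp, hq⟩ := Finset.mem_erase.mp hq
    have hpq : ¬p ∣ q := fun hdvd =>
      hqp ((Nat.prime_dvd_prime_iff_eq (hs p hp) (hs q hq)).mp hdvd).symm
    rw [padicNorm.div, (padicNorm.nat_eq_one_iff q).mpr hpq, div_one]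
    exact padicNorm.of_int _
  have hsplit : (g p : ℚ) / p = z - ∑ q ∈ s.erase p, (g q : ℚ) / q := by
    rw [← h, ← Finset.add_sum_erase s _ hp, add_sub_cancel_right]
  have hle : padicNorm p ((g p : ℚ) / p) ≤ 1 :=
    hsplit ▸ padicNorm.sub.trans (max_le (padicNorm.of_int z) hrest)
  rw [padicNorm.div, padicNorm.padicNorm_p_of_prime, div_inv_eq_mul] at hle
  refine (padicNorm.int_lt_one_iff (g p)).mp ?_
  have hp1 : (1 : ℚ) < p := by exact_mod_cast (hs p hp).one_lt
  nlinarith [padicNorm.nonneg (p := p) (g p : ℚ)]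

def recipSum (T : Multiset ℕ) : ℚ := (T.map fun n : ℕ => (n : ℚ)⁻¹).sum

@[simp] theorem recipSum_zero : recipSum 0 = 0 := by simp [recipSum]

@[simp] theorem recipSum_add (T T' : Multiset ℕ) :
    recipSum (T + T') = recipSum T + recipSum T' := by
  simp [recipSum]

@[simp] theorem recipSum_cons (p : ℕ) (T : Multiset ℕ) :
    recipSum (p ::ₘ T) = (p : ℚ)⁻¹ + recipSum T := by
  simp [recipSum]

@[simp] theorem recipSum_replicate (r p : ℕ) : recipSum (Multiset.replicate r p) = r / p := by
  simp [recipSum, div_eq_mul_inv]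

theorem recipSum_nonneg (T : Multiset ℕ) : 0 ≤ recipSum T :=
  Multiset.sum_nonneg fun x hx => by
    obtain ⟨n, -, rfl⟩ := Multiset.mem_map.mp hx
    positivity

theorem recipSum_eq_sum_count (T : Multiset ℕ) {s : Finset ℕ} (hs : T.toFinset ⊆ s) :
    recipSum T = ∑ p ∈ s, (T.count p : ℚ) / p := by
  rw [recipSum, Finset.sum_multiset_map_count T fun n : ℕ => (n : ℚ)⁻¹,
    ← Multiset.sum_toFinset_count_eq_of_subset T hs (fun p k => (k : ℚ) / p) (by simp)]
  exact Finset.sum_congr rfl fun p _ => by rw [nsmul_eq_mul, div_eq_mul_inv]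

theorem eq_replicate_of_recipSum_eq {T : Multiset ℕ} (hT : ∀ p ∈ T, p.Prime) {P r : ℕ}
    (hP : P.Prime) (hr : r < P) (h : recipSum T = r / P) : T = Multiset.replicate r P := by
  classical
  set s := insert P T.toFinset
  have hs : ∀ p ∈ s, p.Prime := by simpa [s] using ⟨hP, hT⟩
  have hsum := recipSum_eq_sum_count T (Finset.subset_insert P T.toFinset)
  have hlt : ∀ p ∈ s, T.count p < p := fun p hp => by
    have hle : (T.count p : ℚ) / p ≤ r / P := h ▸ hsum ▸ Finset.single_le_sum
      (f := fun q => (T.count q : ℚ) / q) (fun q _ => by positivity) hp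
    have hP0 : (0 : ℚ) < P := by exact_mod_cast hP.pos
    have hp0 : (0 : ℚ) < p := by exact_mod_cast (hs p hp).pos
    have : (T.count p : ℚ) / p < 1 := hle.trans_lt ((div_lt_one hP0).mpr (by exact_mod_cast hr))
    exact_mod_cast (div_lt_one hp0).mp this
  have hdiff : ∀ p ∈ s, (T.count p : ℤ) - (if p = P then r else 0) = 0 := fun p hp => by
    refine Int.eq_zero_of_abs_lt_dvd (prime_dvd_of_sum_div_eq_intCast hs
      (fun p => (T.count p : ℤ) - (if p = P then r else 0)) (z := 0) ?_ hp) ?_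
    · push_cast
      simp only [sub_div, Finset.sum_sub_distrib]
      simp [ite_div, s, ← hsum, h]
    · have := hlt p hp
      rw [abs_lt]
      split_ifs <;> constructor <;> omega
  ext p
  rw [Multiset.count_replicate]
  by_cases hp : p ∈ s
  · have := hdiff p hp
    split_ifs at this ⊢ <;> omega
  · simp only [s, Finset.mem_insert, Multiset.mem_toFinset, not_or] at hp
    rw [Multiset.count_eq_zero.mpr hp.2, if_neg (Ne.symm hp.1)]

theorem exists_eq_replicate_of_recipSum_eq_one {T : Multiset ℕ} (hT : ∀ p ∈ T, p.Prime)
    (h : recipSum T = 1) : ∃ P, T = Multiset.replicate P P := by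
  obtain ⟨P, hP⟩ := Multiset.exists_mem_of_ne_zero (s := T) (by rintro rfl; simp at h)
  obtain ⟨T', rfl⟩ := Multiset.exists_cons_of_mem hP
  have hPp := hT P hP
  have hP0 : (P : ℚ) ≠ 0 := by exact_mod_cast hPp.ne_zero
  have hT' : recipSum T' = ((P - 1 : ℕ) : ℚ) / P := by
    rw [recipSum_cons] at h
    rw [Nat.cast_sub hPp.one_le, sub_div, div_self hP0, Nat.cast_one, one_div]
    linarith
  refine ⟨P, ?_⟩
  rw [eq_replicate_of_recipSum_eq (fun p hp => hT p (Multiset.mem_cons_of_mem hp)) hPp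
    (Nat.sub_lt hPp.pos one_pos) hT', ← Multiset.replicate_succ, Nat.sub_add_cancel hPp.one_le]

theorem mod_eq_of_recipSum_eq {T T' : Multiset ℕ} (hT : ∀ p ∈ T, p.Prime)
    (hT' : ∀ p ∈ T', p.Prime) (h : recipSum T = recipSum T') (p : ℕ) :
    T.count p % p = T'.count p % p := by
  classical
  set s := T.toFinset ∪ T'.toFinset
  by_cases hp : p ∈ s
  · refine (Nat.modEq_iff_dvd.mpr ?_).symm
    refine prime_dvd_of_sum_div_eq_intCast (z := 0) (fun q hq => ?_)
      (fun q => (T.count q : ℤ) - T'.count q) ?_ hp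
    · rcases Finset.mem_union.mp hq with hq | hq
      exacts [hT q (Multiset.mem_toFinset.mp hq), hT' q (Multiset.mem_toFinset.mp hq)]
    · push_cast
      simp only [sub_div, Finset.sum_sub_distrib]
      rw [← recipSum_eq_sum_count T Finset.subset_union_left,
        ← recipSum_eq_sum_count T' Finset.subset_union_right, h, sub_self]
  · simp only [s, Finset.mem_union, Multiset.mem_toFinset, not_or] at hp
    rw [Multiset.count_eq_zero.mpr hp.1, Multiset.count_eq_zero.mpr hp.2]

def wholePart (T : Multiset ℕ) : ℕ := ∑ p ∈ T.toFinset, T.count p / p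

def digitSum (T : Multiset ℕ) : ℕ := ∑ p ∈ T.toFinset, T.count p % p

theorem recipSum_eq_wholePart_add (T : Multiset ℕ) {s : Finset ℕ} (hs : T.toFinset ⊆ s) :
    recipSum T = wholePart T + ∑ p ∈ s, ((T.count p % p : ℕ) : ℚ) / p := by
  rw [recipSum_eq_sum_count T hs, wholePart,
    Multiset.sum_toFinset_count_eq_of_subset T hs (fun p k => k / p) (by simp), Nat.cast_sum,
    ← Finset.sum_add_distrib]
  refine Finset.sum_congr rfl fun p _ => ?_
  rcases Nat.eq_zero_or_pos p with rfl | hp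
  · simp
  rw [div_eq_iff (by positivity), add_mul, div_mul_cancel₀ _ (by positivity)]
  exact_mod_cast (Nat.div_add_mod' (T.count p) p).symm

theorem wholePart_eq_and_digitSum_eq_of_recipSum_eq {T T' : Multiset ℕ}
    (hT : ∀ p ∈ T, p.Prime) (hT' : ∀ p ∈ T', p.Prime) (h : recipSum T = recipSum T') :
    wholePart T = wholePart T' ∧ digitSum T = digitSum T' := by
  classical
  have hmod := mod_eq_of_recipSum_eq hT hT' h
  set s := T.toFinset ∪ T'.toFinset
  have hs : T.toFinset ⊆ s := Finset.subset_union_left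
  have hs' : T'.toFinset ⊆ s := Finset.subset_union_right
  constructor
  · have := recipSum_eq_wholePart_add T hs
    rw [h, recipSum_eq_wholePart_add T' hs'] at this
    simp only [hmod] at this
    exact_mod_cast (add_right_cancel this).symm
  · rw [digitSum, digitSum,
      Multiset.sum_toFinset_count_eq_of_subset T hs (fun p k => k % p) (by simp),
      Multiset.sum_toFinset_count_eq_of_subset T' hs' (fun p k => k % p) (by simp)]
    exact Finset.sum_congr rfl fun p _ => hmod p

theorem wholePart_le_add (T D : Multiset ℕ) : wholePart T ≤ wholePart (T + D) := by
  classical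
  rw [wholePart, wholePart, Multiset.sum_toFinset_count_eq_of_subset T (s := (T + D).toFinset)
    (by simp [Multiset.toFinset_add]) (fun p k => k / p) (by simp)]
  exact Finset.sum_le_sum fun p _ => Nat.div_le_div_right (by simp)

theorem digitSum_add_of_wholePart_eq {T D : Multiset ℕ} (h : wholePart T = wholePart (T + D)) :
    digitSum (T + D) = digitSum T + Multiset.card D := by
  classical
  set s := (T + D).toFinset
  have hT : T.toFinset ⊆ s := by simp [s, Multiset.toFinset_add]
  have hD : D.toFinset ⊆ s := by simp [s, Multiset.toFinset_add]
  rw [wholePart, wholePart,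
    Multiset.sum_toFinset_count_eq_of_subset T hT (fun p k => k / p) (by simp)] at h
  -- equal whole parts force every `(T + D).count p / p` to equal `T.count p / p`: no carries
  have hdiv := (Finset.sum_eq_sum_iff_of_le fun p _ =>
    Nat.div_le_div_right (Multiset.count_le_of_le p (Multiset.le_add_right T D))).mp h
  rw [digitSum, digitSum,
    Multiset.sum_toFinset_count_eq_of_subset T hT (fun p k => k % p) (by simp),
    ← Multiset.toFinset_sum_count_eq,
    Multiset.sum_toFinset_count_eq_of_subset D hD (fun _ k => k) (by simp),
    ← Finset.sum_add_distrib]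
  refine Finset.sum_congr rfl fun p hp => ?_
  have h1 := Nat.div_add_mod (T.count p) p
  have h2 := Nat.div_add_mod ((T + D).count p) p
  rw [← hdiv p hp, Multiset.count_add] at h2
  rw [Multiset.count_add]
  omega

theorem exists_multiset_of_mem_MP {S : Set ℕ} {x : ℚ} (hx : x ∈ MP S) :
    ∃ T : Multiset ℕ, (∀ p ∈ T, p ∈ S) ∧ recipSum T = x := by
  obtain ⟨l, hl, rfl⟩ := AddSubmonoid.exists_multiset_of_mem_closure hx
  obtain ⟨T, hTS, hT⟩ := Multiset.exists_map_eq_of_forall_mem_image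
    (f := fun n : ℕ => (n : ℚ)⁻¹) (A := S) fun y hy => by
      obtain ⟨p, hp, rfl⟩ := hl y hy
      exact ⟨p, hp, (one_div _).symm⟩
  exact ⟨T, hTS, by rw [recipSum, hT]⟩

theorem nonneg_of_mem_MP {S : Set ℕ} {x : ℚ} (hx : x ∈ MP S) : 0 ≤ x := by
  obtain ⟨T, -, rfl⟩ := exists_multiset_of_mem_MP hx
  exact recipSum_nonneg T

theorem natCast_div_mem_MP {S : Set ℕ} {p : ℕ} (hp : p ∈ S) (k : ℕ) : (k : ℚ) / p ∈ MP S := by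
  have hgen : 1 / (p : ℚ) ∈ MP S := AddSubmonoid.subset_closure ⟨p, hp, rfl⟩
  rw [div_eq_mul_one_div, ← nsmul_eq_mul]
  exact nsmul_mem hgen k

theorem addACCP_MP {S : Set ℕ} (hS : ∀ p ∈ S, p.Prime) : AddACCP (MP S) := by
  have hrep : ∀ x : ℚ, ∃ T : Multiset ℕ, x ∈ MP S → (∀ p ∈ T, p ∈ S) ∧ recipSum T = x :=
    fun x => by
      by_cases hx : x ∈ MP S
      · obtain ⟨T, hT⟩ := exists_multiset_of_mem_MP hx
        exact ⟨T, fun _ => hT⟩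
      · exact ⟨0, fun h => absurd h hx⟩
  choose T hT using hrep
  refine AddACCP.of_lt_add (fun x => toLex (wholePart (T x), digitSum (T x)))
    fun y hy z hz hz0 => ?_
  obtain ⟨hyS, hyT⟩ := hT y hy
  obtain ⟨hzS, hzT⟩ := hT z hz
  obtain ⟨hyzS, hyzT⟩ := hT (y + z) (add_mem hy hz)
  have hTz : T z ≠ 0 := fun h => hz0 (by rw [← hzT, h, recipSum_zero])
  obtain ⟨hwhole, hdigit⟩ := wholePart_eq_and_digitSum_eq_of_recipSum_eq
    (fun p hp => hS p (hyzS p hp))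
    (fun p hp => (Multiset.mem_add.mp hp).elim (fun h => hS p (hyS p h)) fun h => hS p (hzS p h))
    (by rw [recipSum_add, hyT, hzT, hyzT])
  simp only [hwhole, hdigit, Prod.Lex.toLex_lt_toLex]
  rcases (wholePart_le_add (T y) (T z)).lt_or_eq with hlt | heq
  · exact Or.inl hlt
  · refine Or.inr ⟨heq, ?_⟩
    rw [digitSum_add_of_wholePart_eq heq]
    exact Nat.lt_add_of_pos_right (Multiset.card_pos.mpr hTz)

end Puiseux

section LengthSetGens

local notation "𝔭" => Nat.nth Nat.Prime

theorem nth_prime_injective : Function.Injective (𝔭) :=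
  Nat.nth_injective Nat.infinite_setOfPred_prime

noncomputable def atomU (ℓ : ℕ) : ℚ × ℚ := (1, ((𝔭 ℓ + 1 - ℓ : ℕ) : ℚ) / 𝔭 ℓ)

noncomputable def atomV (ℓ : ℕ) : ℚ × ℚ := (0, (𝔭 ℓ : ℚ)⁻¹)

noncomputable def lengthSetGens (L : Set ℕ) : Set (ℚ × ℚ) := atomU '' L ∪ atomV '' L

noncomputable def atomDenominators (t₁ t₂ : Multiset ℕ) : Multiset ℕ :=
  t₁.bind (fun ℓ => Multiset.replicate (𝔭 ℓ + 1 - ℓ) (𝔭 ℓ)) + t₂.map 𝔭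

theorem prime_of_mem_atomDenominators {t₁ t₂ : Multiset ℕ} {p : ℕ}
    (hp : p ∈ atomDenominators t₁ t₂) : p.Prime := by
  simp only [atomDenominators, Multiset.mem_add, Multiset.mem_bind, Multiset.mem_map] at hp
  obtain ⟨ℓ, -, hℓ⟩ | ⟨ℓ, -, rfl⟩ := hp
  · exact Multiset.eq_of_mem_replicate hℓ ▸ Nat.prime_nth_prime ℓ
  · exact Nat.prime_nth_prime ℓ

theorem sum_map_atomU_add_map_atomV (t₁ t₂ : Multiset ℕ) :
    (t₁.map atomU + t₂.map atomV).sum =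
      ((Multiset.card t₁ : ℚ), recipSum (atomDenominators t₁ t₂)) := by
  induction t₁ using Multiset.induction_on with
  | empty =>
    induction t₂ using Multiset.induction_on with
    | empty => ext <;> simp [atomDenominators]
    | cons ℓ t₂ ih => simp_all [atomDenominators, atomV]
  | cons ℓ t₁ ih =>
    rw [Multiset.map_cons, Multiset.cons_add, Multiset.sum_cons, ih]
    ext <;> simp [atomU, atomDenominators] <;> ring

theorem nonneg_and_ne_zero_of_mem_lengthSetGens {L : Set ℕ} {x : ℚ × ℚ}
    (hx : x ∈ lengthSetGens L) : 0 ≤ x ∧ x ≠ 0 := by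
  have hp (ℓ : ℕ) : (0 : ℚ) < 𝔭 ℓ := by exact_mod_cast (Nat.prime_nth_prime ℓ).pos
  rcases hx with ⟨ℓ, -, rfl⟩ | ⟨ℓ, -, rfl⟩
  · exact ⟨Prod.le_def.mpr ⟨zero_le_one, div_nonneg (Nat.cast_nonneg _) (hp ℓ).le⟩,
      fun h => one_ne_zero (congrArg Prod.fst h)⟩
  · exact ⟨Prod.le_def.mpr ⟨le_rfl, (inv_pos.mpr (hp ℓ)).le⟩,
      fun h => (inv_pos.mpr (hp ℓ)).ne' (congrArg Prod.snd h)⟩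

theorem mem_MP_of_mem_lengthSetGens {L : Set ℕ} {x : ℚ × ℚ} (hx : x ∈ lengthSetGens L) :
    x.1 ∈ MP {p | p.Prime} ∧ x.2 ∈ MP {p | p.Prime} := by
  have hone : (1 : ℚ) ∈ MP {p | p.Prime} := by
    simpa using natCast_div_mem_MP (show 2 ∈ {p | p.Prime} from Nat.prime_two) 2
  rcases hx with ⟨ℓ, -, rfl⟩ | ⟨ℓ, -, rfl⟩
  · exact ⟨hone, natCast_div_mem_MP (Nat.prime_nth_prime ℓ) _⟩
  · refine ⟨zero_mem _, ?_⟩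
    have := natCast_div_mem_MP (S := {p | p.Prime}) (Nat.prime_nth_prime ℓ) 1
    rwa [Nat.cast_one, one_div] at this

theorem exists_of_mem_factorizations_lengthSetGens {L : Set ℕ} {s : Multiset (ℚ × ℚ)}
    {x : ℚ × ℚ} (hs : s ∈ factorizations (lengthSetGens L) x) :
    ∃ t₁ t₂ : Multiset ℕ, (∀ ℓ ∈ t₁, ℓ ∈ L) ∧ s = t₁.map atomU + t₂.map atomV ∧
      x = ((Multiset.card t₁ : ℚ), recipSum (atomDenominators t₁ t₂)) := by
  obtain ⟨t₁, t₂, h₁, -, rfl⟩ := Multiset.exists_map_add_map_eq_of_forall_mem_union hs.1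
  exact ⟨t₁, t₂, h₁, rfl, hs.2 ▸ sum_map_atomU_add_map_atomV t₁ t₂⟩

theorem factorizations_lengthSetGens_atomV {L : Set ℕ} {ℓ : ℕ} (hℓ : ℓ ∈ L) :
    factorizations (lengthSetGens L) (atomV ℓ) = {{atomV ℓ}} := by
  ext s
  refine ⟨fun hs => ?_, fun hs => ?_⟩
  · obtain ⟨t₁, t₂, -, rfl, hx⟩ := exists_of_mem_factorizations_lengthSetGens hs
    simp only [atomV, Prod.mk.injEq] at hx
    obtain rfl : t₁ = 0 := Multiset.card_eq_zero.mp (by exact_mod_cast hx.1.symm)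
    have hden : atomDenominators 0 t₂ = Multiset.replicate 1 (𝔭 ℓ) :=
      eq_replicate_of_recipSum_eq (fun p hp => prime_of_mem_atomDenominators hp)
        (Nat.prime_nth_prime ℓ) (Nat.prime_nth_prime ℓ).one_lt
        (by rw [← hx.2, Nat.cast_one, one_div])
    have ht₂ : t₂ = {ℓ} :=
      Multiset.map_injective nth_prime_injective (by simpa [atomDenominators] using hden)
    simp [ht₂]
  · rw [Set.mem_singleton_iff.mp hs]
    exact ⟨by simpa [lengthSetGens] using Or.inr ⟨ℓ, hℓ, rfl⟩, Multiset.sum_singleton _⟩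

theorem factorizations_lengthSetGens_atomU {L : Set ℕ} {ℓ : ℕ} (hℓ : ℓ ∈ L) (hℓ2 : 2 ≤ ℓ) :
    factorizations (lengthSetGens L) (atomU ℓ) = {{atomU ℓ}} := by
  ext s
  refine ⟨fun hs => ?_, fun hs => ?_⟩
  · obtain ⟨t₁, t₂, -, rfl, hx⟩ := exists_of_mem_factorizations_lengthSetGens hs
    simp only [atomU, Prod.mk.injEq] at hx
    obtain ⟨ℓ', rfl⟩ := Multiset.card_eq_one.mp (by exact_mod_cast hx.1.symm)
    have hden : atomDenominators {ℓ'} t₂ = Multiset.replicate (𝔭 ℓ + 1 - ℓ) (𝔭 ℓ) :=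
      eq_replicate_of_recipSum_eq (fun p hp => prime_of_mem_atomDenominators hp)
        (Nat.prime_nth_prime ℓ) (by have := Nat.add_two_le_nth_prime ℓ; omega) hx.2.symm
    simp only [atomDenominators, Multiset.singleton_bind] at hden
    have hℓ' : ℓ' = ℓ := by
      have hmem : 𝔭 ℓ' ∈ Multiset.replicate (𝔭 ℓ + 1 - ℓ) (𝔭 ℓ) := hden ▸ Multiset.mem_add.mpr
        (Or.inl (Multiset.mem_replicate.mpr ⟨by have := Nat.add_two_le_nth_prime ℓ'; omega, rfl⟩))
      exact nth_prime_injective (Multiset.eq_of_mem_replicate hmem)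
    subst hℓ'
    have ht₂ : t₂ = 0 := Multiset.map_eq_zero.mp (add_eq_left.mp hden)
    simp [ht₂]
  · rw [Set.mem_singleton_iff.mp hs]
    exact ⟨by simpa [lengthSetGens] using Or.inl ⟨ℓ, hℓ, rfl⟩, Multiset.sum_singleton _⟩

theorem mem_factorizations_lengthSetGens_one_one {L : Set ℕ} {ℓ : ℕ} (hℓ : ℓ ∈ L)
    (hℓ0 : ℓ ≠ 0) : ({ℓ} : Multiset ℕ).map atomU + (Multiset.replicate (ℓ - 1) ℓ).map atomV ∈
      factorizations (lengthSetGens L) (1, 1) := by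
  refine ⟨fun a ha => ?_, ?_⟩
  · simp only [Multiset.map_singleton, Multiset.map_replicate, Multiset.mem_add,
      Multiset.mem_singleton, Multiset.mem_replicate] at ha
    rcases ha with rfl | ⟨-, rfl⟩
    exacts [Or.inl ⟨ℓ, hℓ, rfl⟩, Or.inr ⟨ℓ, hℓ, rfl⟩]
  · have := Nat.add_two_le_nth_prime ℓ
    rw [sum_map_atomU_add_map_atomV]
    simp only [atomDenominators, Multiset.singleton_bind, Multiset.map_replicate,
      ← Multiset.replicate_add, recipSum_replicate, Multiset.card_singleton]
    rw [show 𝔭 ℓ + 1 - ℓ + (ℓ - 1) = 𝔭 ℓ by omega,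
      div_self (by exact_mod_cast (Nat.prime_nth_prime ℓ).ne_zero), Nat.cast_one]

theorem card_image_factorizations_lengthSetGens {L : Set ℕ} (hL : 0 ∉ L) :
    Multiset.card '' factorizations (lengthSetGens L) (1, 1) = L := by
  ext n
  refine ⟨fun ⟨s, hs, hn⟩ => ?_, fun hn => ?_⟩
  · obtain ⟨t₁, t₂, ht₁, rfl, hx⟩ := exists_of_mem_factorizations_lengthSetGens hs
    simp only [Prod.mk.injEq] at hx
    obtain ⟨ℓ, rfl⟩ := Multiset.card_eq_one.mp (by exact_mod_cast hx.1.symm)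
    obtain ⟨P, hP⟩ := exists_eq_replicate_of_recipSum_eq_one
      (fun p hp => prime_of_mem_atomDenominators hp) hx.2.symm
    simp only [atomDenominators, Multiset.singleton_bind] at hP
    have := Nat.add_two_le_nth_prime ℓ
    have hℓP : 𝔭 ℓ = P := Multiset.eq_of_mem_replicate (hP ▸ Multiset.mem_add.mpr
      (Or.inl (Multiset.mem_replicate.mpr ⟨by omega, rfl⟩)))
    have hcard := congrArg Multiset.card hP
    simp only [Multiset.card_add, Multiset.card_replicate, Multiset.card_map] at hcard
    rw [← hn, Multiset.card_add, Multiset.card_map, Multiset.card_map, Multiset.card_singleton]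
    convert ht₁ ℓ (Multiset.mem_singleton_self ℓ) using 1
    omega
  · have hn0 : n ≠ 0 := fun h => hL (h ▸ hn)
    refine ⟨_, mem_factorizations_lengthSetGens_one_one hn hn0, ?_⟩
    simp only [Multiset.card_add, Multiset.card_map, Multiset.card_singleton,
      Multiset.card_replicate]
    omega

end LengthSetGens

section Blocks

variable {κ : Type*}

noncomputable def blockEmb (i : κ) : ℚ × ℚ →+ (κ × Bool →₀ ℚ) :=
  (Finsupp.singleAddHom (i, false)).comp (AddMonoidHom.fst ℚ ℚ) +
    (Finsupp.singleAddHom (i, true)).comp (AddMonoidHom.snd ℚ ℚ)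

@[simp] theorem blockEmb_apply_false (i : κ) (x : ℚ × ℚ) : blockEmb i x (i, false) = x.1 := by
  simp [blockEmb]

@[simp] theorem blockEmb_apply_true (i : κ) (x : ℚ × ℚ) : blockEmb i x (i, true) = x.2 := by
  simp [blockEmb]

theorem blockEmb_apply_of_ne {i j : κ} (hij : i ≠ j) (x : ℚ × ℚ) (β : Bool) :
    blockEmb i x (j, β) = 0 := by
  simp [blockEmb, hij]

theorem blockEmb_injective (i : κ) : Function.Injective (blockEmb i) := fun x y h => by
  have h₁ := congrArg (· (i, false)) h
  have h₂ := congrArg (· (i, true)) h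
  simp only [blockEmb_apply_false, blockEmb_apply_true] at h₁ h₂
  exact Prod.ext h₁ h₂

theorem blockEmb_injective_left {x : ℚ × ℚ} (hx : x ≠ 0) :
    Function.Injective (blockEmb (κ := κ) · x) := fun i j h => by
  by_contra hij
  have h₁ := congrArg (· (i, false)) h
  have h₂ := congrArg (· (i, true)) h
  simp only [blockEmb_apply_false, blockEmb_apply_true, blockEmb_apply_of_ne (Ne.symm hij)]
    at h₁ h₂
  exact hx (Prod.ext h₁ h₂)

theorem blockEmb_nonneg (i : κ) {x : ℚ × ℚ} (hx : 0 ≤ x) : 0 ≤ blockEmb i x :=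
  Finsupp.le_def.mpr fun ⟨j, β⟩ => by
    by_cases hij : i = j
    · subst hij
      cases β
      exacts [by simpa using hx.1, by simpa using hx.2]
    · rw [blockEmb_apply_of_ne hij, Finsupp.coe_zero, Pi.zero_apply]

theorem factorizations_iUnion_image_blockEmb {G : κ → Set (ℚ × ℚ)}
    (hG : ∀ i, ∀ x ∈ G i, 0 ≤ x ∧ x ≠ 0) (i : κ) (x : ℚ × ℚ) :
    factorizations (⋃ j, blockEmb j '' G j) (blockEmb i x) =
      Multiset.map (blockEmb i) '' factorizations (G i) x := by
  ext s
  constructor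
  · rintro ⟨hsG, hsum⟩
    have hsG' : ∀ y ∈ s, ∃ j, ∃ g ∈ G j, blockEmb j g = y := fun y hy => by
      simpa using hsG y hy
    have hnonneg : ∀ y ∈ s, 0 ≤ y := fun y hy => by
      obtain ⟨j, g, hg, rfl⟩ := hsG' y hy
      exact blockEmb_nonneg j (hG j g hg).1
    -- a summand from another block would be a nonzero vector below `blockEmb i x`
    have hblock : ∀ y ∈ s, y ∈ blockEmb i '' G i := fun y hy => by
      obtain ⟨j, g, hg, rfl⟩ := hsG' y hy
      obtain rfl : j = i := by
        by_contra hji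
        have hle := Finsupp.le_def.mp (hsum ▸ Multiset.single_le_sum hnonneg _ hy)
        have h₁ := hle (j, false)
        have h₂ := hle (j, true)
        simp only [blockEmb_apply_false, blockEmb_apply_true,
          blockEmb_apply_of_ne (Ne.symm hji)] at h₁ h₂
        exact (hG j g hg).2 (le_antisymm (Prod.mk_le_mk.mpr ⟨h₁, h₂⟩) (hG j g hg).1)
      exact ⟨g, hg, rfl⟩
    obtain ⟨t, htG, rfl⟩ := Multiset.exists_map_eq_of_forall_mem_image hblock
    exact ⟨t, ⟨htG, blockEmb_injective i (by rw [map_multiset_sum, hsum])⟩, rfl⟩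
  · rintro ⟨t, ⟨htG, hsum⟩, rfl⟩
    refine ⟨fun y hy => ?_, by rw [← map_multiset_sum, hsum]⟩
    obtain ⟨g, hg, rfl⟩ := Multiset.mem_map.mp hy
    exact Set.mem_iUnion.mpr ⟨i, g, htG g hg, rfl⟩

end Blocks

abbrev BlockIndex : Type := {L : Set ℕ // ∀ ℓ ∈ L, 2 ≤ ℓ} × ℝ

noncomputable def lengthSetMonoid : AddSubmonoid (BlockIndex × Bool →₀ ℚ) :=
  AddSubmonoid.closure (⋃ i : BlockIndex, blockEmb i '' lengthSetGens i.1.1)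

theorem lengthSetMonoid_nonneg {x : BlockIndex × Bool →₀ ℚ} (hx : x ∈ lengthSetMonoid)
    (j : BlockIndex × Bool) : 0 ≤ x j := by
  refine Finsupp.le_def.mp (AddSubmonoid.mem_nonneg.mp ((AddSubmonoid.closure_le.mpr ?_) hx)) j
  simp only [Set.iUnion_subset_iff, Set.image_subset_iff]
  exact fun i g hg => AddSubmonoid.mem_nonneg.mpr
    (blockEmb_nonneg i (nonneg_and_ne_zero_of_mem_lengthSetGens hg).1)

theorem lengthSetMonoid_apply_mem_MP {x : BlockIndex × Bool →₀ ℚ} (hx : x ∈ lengthSetMonoid)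
    (j : BlockIndex × Bool) : x j ∈ MP {p | p.Prime} := by
  induction hx using AddSubmonoid.closure_induction with
  | mem y hy =>
    obtain ⟨i, g, hg, rfl⟩ : ∃ i, ∃ g ∈ lengthSetGens i.1.1, blockEmb i g = y := by
      simpa using hy
    obtain ⟨j, β⟩ := j
    by_cases hij : i = j
    · subst hij
      cases β
      exacts [by simpa using (mem_MP_of_mem_lengthSetGens hg).1,
        by simpa using (mem_MP_of_mem_lengthSetGens hg).2]
    · rw [blockEmb_apply_of_ne hij]
      exact zero_mem _
  | zero => exact zero_mem _
  | add y z _ _ hy hz => exact add_mem hy hz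

theorem addACCP_lengthSetMonoid : AddACCP lengthSetMonoid :=
  AddACCP.of_forall_apply_mem (addACCP_MP fun _ hp => hp) (fun _ hx => nonneg_of_mem_MP hx)
    fun _ hx => lengthSetMonoid_apply_mem_MP hx

theorem isAtomOf_lengthSetMonoid {a : BlockIndex × Bool →₀ ℚ}
    (ha : a ∈ ⋃ i : BlockIndex, blockEmb i '' lengthSetGens i.1.1) :
    IsAtomOf lengthSetMonoid a := by
  obtain ⟨i, g, hg, rfl⟩ : ∃ i, ∃ g ∈ lengthSetGens i.1.1, blockEmb i g = a := by
    simpa using ha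
  refine isAtomOf_closure_of_factorizations_eq ?_
  rw [factorizations_iUnion_image_blockEmb (fun _ _ => nonneg_and_ne_zero_of_mem_lengthSetGens)]
  rcases hg with ⟨ℓ, hℓ, rfl⟩ | ⟨ℓ, hℓ, rfl⟩
  · rw [factorizations_lengthSetGens_atomU hℓ (i.1.2 ℓ hℓ)]
    simp
  · rw [factorizations_lengthSetGens_atomV hℓ]
    simp

theorem lengthSet_lengthSetMonoid (i : BlockIndex) :
    LengthSet lengthSetMonoid (blockEmb i (1, 1)) = i.1.1 := by
  rw [lengthSetMonoid, lengthSet_closure fun _ => isAtomOf_lengthSetMonoid,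
    factorizations_iUnion_image_blockEmb (fun _ _ => nonneg_and_ne_zero_of_mem_lengthSetGens),
    Set.image_image]
  simp only [Multiset.card_map]
  exact card_image_factorizations_lengthSetGens fun h => by have := i.1.2 0 h; omega

theorem stmt17 :
    ∃ (ι : Type) (M : AddSubmonoid (ι →₀ ℚ)),
      (∀ x ∈ M, ∀ i, 0 ≤ x i) ∧ AddACCP M ∧
      (∀ L : Set ℕ, L.Nonempty → (∀ ℓ ∈ L, 2 ≤ ℓ) →
        ∃ b ∈ M, LengthSet M b = L) ∧
      (∀ L : Set ℕ, L.Nonempty → (∀ ℓ ∈ L, 2 < ℓ) →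
        ¬ Set.Countable {b : ι →₀ ℚ | b ∈ M ∧ LengthSet M b = L}) := by
  have hmem (i : BlockIndex) (hi : i.1.1.Nonempty) : blockEmb i (1, 1) ∈ lengthSetMonoid :=
    mem_of_mem_lengthSet (ℓ := hi.some) (by rw [lengthSet_lengthSetMonoid]; exact hi.some_mem)
  refine ⟨BlockIndex × Bool, lengthSetMonoid, fun _ => lengthSetMonoid_nonneg,
    addACCP_lengthSetMonoid,
    fun L hL hL2 => ⟨_, hmem (⟨L, hL2⟩, 0) hL, lengthSet_lengthSetMonoid _⟩,
    fun L hL hL3 hcount => ?_⟩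
  have hL2 : ∀ ℓ ∈ L, 2 ≤ ℓ := fun ℓ hℓ => (hL3 ℓ hℓ).le
  set b : ℝ → BlockIndex × Bool →₀ ℚ := fun r => blockEmb (⟨L, hL2⟩, r) (1, 1)
  have hmaps : Set.MapsTo b Set.univ {b | b ∈ lengthSetMonoid ∧ LengthSet lengthSetMonoid b = L} :=
    fun r _ => ⟨hmem _ hL, lengthSet_lengthSetMonoid _⟩
  have hinj : Set.InjOn b Set.univ := fun r _ r' _ h =>
    congrArg Prod.snd (blockEmb_injective_left (by simp) h)
  exact not_countable (Set.countable_univ_iff.mp (hmaps.countable_of_injOn hinj hcount))
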